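/- arXiv:1708.06934 — 6 statements merged into one kernel-verified Lean document; each statement's English description precedes it below -/
import Mathlib

section
/- (Green's formula) Let (X,b,m) be a weighted graph, θ a magnetic potential and v an electric potential on X. Then for every f ∈ C̃(X) and every g ∈ C_c(X), all of the following sums converge absolutely and one has ∑_{x∈X} (L̃_{v,θ}f)(x)·conj(g(x))·m(x) = ∑_{x∈X} f(x)·conj((L̃_{v,θ}g)(x))·m(x) = (1/2)∑_{x,y∈X} b(x,y)(f(x) − e^{iθ(x,y)}f(y))·conj(g(x) − e^{iθ(x,y)}g(y)) + ∑_{x∈X} v(x)f(x)·conj(g(x))·m(x). -/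
/-!
Write `∇f(x,y) = f(x) - e^{iθ(x,y)} f(y)`. Multiplying `(L̃f)(x)` by `conj g(x) m(x)` cancels the
weight, leaving `∑_y b(x,y) ∇f(x,y) conj g(x) + v f conj g m`, and similarly
`f(x) conj (L̃g)(x) m(x) = ∑_y b(x,y) f(x) conj ∇g(x,y) + v f conj g m`. Because `g` is finitely
supported and `∑_y b(x,y)|f(y)| < ∞`, every double sum over `X × X` is dominated by the summable
`b(x,y)(|f x| + |f y|)(|g x| + |g y|)`, so Fubini applies. Symmetry of `b` and antisymmetry of `θ`
give `∇f(y,x) = -e^{iθ(y,x)} ∇f(x,y)`, whence the energy summand `b ∇f conj ∇g` at `(x,y)` is the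
sum of `b ∇f conj g(x)` at `(x,y)` and at `(y,x)`, and likewise for `b f(x) conj ∇g`. As a sum over
`X × X` is invariant under swapping the coordinates, both equalities follow.
-/

open Complex

/-- The formal magnetic Schrödinger operator `L̃_{v,θ}` on a weighted graph `(X,b,m)`:
`(L̃_{v,θ} f)(x) = (1/m(x)) ∑_y b(x,y)(f(x) - e^{iθ(x,y)} f(y)) + v(x) f(x)`. -/
noncomputable def magneticSchrodingerOp {X : Type*} (b : X → X → ℝ) (m : X → ℝ)
    (θ : X → X → ℝ) (v : X → ℝ) (f : X → ℂ) : X → ℂ := fun x =>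
  (m x)⁻¹ * (∑' y, (b x y : ℂ) * (f x - Complex.exp (Complex.I * (θ x y)) * f y))
    + (v x) * f x

open Function ComplexConjugate

section Summation

variable {X Y : Type*}

theorem tsum_add_comp_swap {M : Type*} [AddCommMonoid M] [TopologicalSpace M] [ContinuousAdd M]
    [T2Space M] {F : X × X → M} (hF : Summable F) :
    ∑' p, (F p + F p.swap) = 2 • ∑' p, F p := by
  rw [hF.tsum_add hF.prod_symm, two_nsmul]
  congr 1
  exact (Equiv.prodComm X X).tsum_eq F

theorem summable_prod_of_nonneg_of_fst_finite {K : X × Y → ℝ} (hK : 0 ≤ K) {s : Set X}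
    (hs : s.Finite) (hKs : ∀ x ∉ s, ∀ y, K (x, y) = 0) (hrow : ∀ x, Summable fun y => K (x, y)) :
    Summable K :=
  (summable_prod_of_nonneg hK).2 ⟨hrow, summable_of_hasFiniteSupport <| hs.subset fun x hx => by
    by_contra hxs
    exact hx (by simp [hKs x hxs])⟩

theorem summable_norm_tsum_fiber {E : Type*} [NormedAddCommGroup E] {F : X × Y → E}
    (hF : Summable fun p => ‖F p‖) : Summable fun x => ‖∑' y, F (x, y)‖ :=
  hF.prod.of_nonneg_of_le (fun _ => norm_nonneg _) fun x =>
    norm_tsum_le_tsum_norm (hF.prod_factor x)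

theorem summable_norm_mul_conj_mul_of_finite {g : X → ℂ} (hg : (support g).Finite) (u w : X → ℂ) :
    Summable fun x => ‖u x * conj (g x) * w x‖ :=
  summable_of_hasFiniteSupport <| hg.subset fun x hx hgx => hx (by simp [hgx])

end Summation

section MagneticDifference

variable {X : Type*} {E : X → X → ℂ}

def magneticDiff (E : X → X → ℂ) (f : X → ℂ) (x y : X) : ℂ := f x - E x y * f y

theorem mul_swap_eq_one_of_conj (hE : ∀ x y, ‖E x y‖ = 1) (hE' : ∀ x y, conj (E x y) = E y x)
    (x y : X) : E y x * E x y = 1 := by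
  rw [← hE' x y, conj_mul', hE]
  simp

theorem magneticDiff_swap (hE : ∀ x y, ‖E x y‖ = 1) (hE' : ∀ x y, conj (E x y) = E y x)
    (f : X → ℂ) (x y : X) :
    magneticDiff E f y x = -(E y x * magneticDiff E f x y) := by
  unfold magneticDiff
  linear_combination -(f y) * mul_swap_eq_one_of_conj hE hE' x y

theorem norm_magneticDiff_le (hE : ∀ x y, ‖E x y‖ = 1) (f : X → ℂ) (x y : X) :
    ‖magneticDiff E f x y‖ ≤ ‖f x‖ + ‖f y‖ :=
  (norm_sub_le _ _).trans_eq (by rw [norm_mul, hE, one_mul])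

variable {b : X → X → ℝ}

theorem ofReal_mul_magneticDiff_mul_conj_magneticDiff_eq_left (hb : ∀ x y, b x y = b y x)
    (hE : ∀ x y, ‖E x y‖ = 1) (hE' : ∀ x y, conj (E x y) = E y x) (f g : X → ℂ) (x y : X) :
    (b x y : ℂ) * magneticDiff E f x y * conj (magneticDiff E g x y) =
      (b x y : ℂ) * magneticDiff E f x y * conj (g x) +
        (b y x : ℂ) * magneticDiff E f y x * conj (g y) := by
  rw [hb y x, magneticDiff_swap hE hE' f x y]
  simp only [magneticDiff, map_sub, map_mul, hE']
  ring

theorem ofReal_mul_magneticDiff_mul_conj_magneticDiff_eq_right (hb : ∀ x y, b x y = b y x)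
    (hE : ∀ x y, ‖E x y‖ = 1) (hE' : ∀ x y, conj (E x y) = E y x) (f g : X → ℂ) (x y : X) :
    (b x y : ℂ) * magneticDiff E f x y * conj (magneticDiff E g x y) =
      (b x y : ℂ) * f x * conj (magneticDiff E g x y) +
        (b y x : ℂ) * f y * conj (magneticDiff E g y x) := by
  rw [hb y x, magneticDiff_swap hE hE' g x y, map_neg, map_mul, hE']
  simp only [magneticDiff]
  ring

end MagneticDifference

section PairSums

variable {X : Type*} {b : X → X → ℝ} {E : X → X → ℂ} {f g : X → ℂ}

theorem summable_mul_norm_add_mul_norm_add (hb : ∀ x y, b x y = b y x) (hb0 : ∀ x y, 0 ≤ b x y)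
    (hb_sum : ∀ x, Summable fun y => b x y) (hf : ∀ x, Summable fun y => b x y * ‖f y‖)
    (hg : (support g).Finite) :
    Summable fun p : X × X => b p.1 p.2 * (‖f p.1‖ + ‖f p.2‖) * (‖g p.1‖ + ‖g p.2‖) := by
  -- The majorant is `K + K ∘ swap`, and `K` vanishes off `support g × X`.
  set K : X × X → ℝ := fun p => b p.1 p.2 * (‖f p.1‖ + ‖f p.2‖) * ‖g p.1‖
  have hK : Summable K := by
    refine summable_prod_of_nonneg_of_fst_finite
      (fun p => mul_nonneg (mul_nonneg (hb0 _ _) (by positivity)) (norm_nonneg _)) hg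
      (fun x hx y => by simp [K, notMem_support.1 hx]) fun x => ?_
    exact ((((hb_sum x).mul_right ‖f x‖).add (hf x)).mul_right ‖g x‖).congr fun y => by
      simp only [K]; ring
  refine (hK.add hK.prod_symm).congr fun p => ?_
  simp only [K, Prod.fst_swap, Prod.snd_swap, hb p.2 p.1]
  ring

theorem summable_norm_ofReal_mul_mul_conj (hb : ∀ x y, b x y = b y x) (hb0 : ∀ x y, 0 ≤ b x y)
    (hb_sum : ∀ x, Summable fun y => b x y) (hf : ∀ x, Summable fun y => b x y * ‖f y‖)
    (hg : (support g).Finite) {u w : X × X → ℂ} (hu : ∀ p, ‖u p‖ ≤ ‖f p.1‖ + ‖f p.2‖)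
    (hw : ∀ p, ‖w p‖ ≤ ‖g p.1‖ + ‖g p.2‖) :
    Summable fun p : X × X => ‖(b p.1 p.2 : ℂ) * u p * conj (w p)‖ := by
  refine (summable_mul_norm_add_mul_norm_add hb hb0 hb_sum hf hg).of_nonneg_of_le
    (fun _ => norm_nonneg _) fun p => ?_
  rw [norm_mul, norm_mul, norm_conj, norm_real, Real.norm_of_nonneg (hb0 _ _)]
  have hbp := hb0 p.1 p.2
  gcongr
  exacts [hu p, hw p]

theorem tsum_ofReal_mul_magneticDiff_mul_conj_magneticDiff_eq_left (hb : ∀ x y, b x y = b y x)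
    (hE : ∀ x y, ‖E x y‖ = 1) (hE' : ∀ x y, conj (E x y) = E y x)
    (hsum : Summable fun p : X × X => (b p.1 p.2 : ℂ) * magneticDiff E f p.1 p.2 * conj (g p.1)) :
    ∑' p : X × X, (b p.1 p.2 : ℂ) * magneticDiff E f p.1 p.2 * conj (magneticDiff E g p.1 p.2) =
      2 * ∑' p : X × X, (b p.1 p.2 : ℂ) * magneticDiff E f p.1 p.2 * conj (g p.1) := by
  refine (tsum_congr fun p : X × X =>
    ofReal_mul_magneticDiff_mul_conj_magneticDiff_eq_left hb hE hE' f g p.1 p.2).trans ?_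
  exact (tsum_add_comp_swap hsum).trans ((two_nsmul _).trans (two_mul _).symm)

theorem tsum_ofReal_mul_magneticDiff_mul_conj_magneticDiff_eq_right (hb : ∀ x y, b x y = b y x)
    (hE : ∀ x y, ‖E x y‖ = 1) (hE' : ∀ x y, conj (E x y) = E y x)
    (hsum : Summable fun p : X × X => (b p.1 p.2 : ℂ) * f p.1 * conj (magneticDiff E g p.1 p.2)) :
    ∑' p : X × X, (b p.1 p.2 : ℂ) * magneticDiff E f p.1 p.2 * conj (magneticDiff E g p.1 p.2) =
      2 * ∑' p : X × X, (b p.1 p.2 : ℂ) * f p.1 * conj (magneticDiff E g p.1 p.2) := by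
  refine (tsum_congr fun p : X × X =>
    ofReal_mul_magneticDiff_mul_conj_magneticDiff_eq_right hb hE hE' f g p.1 p.2).trans ?_
  exact (tsum_add_comp_swap hsum).trans ((two_nsmul _).trans (two_mul _).symm)

end PairSums

section Operator

variable {X : Type*} {m : X → ℝ}

noncomputable def magneticPhase (θ : X → X → ℝ) (x y : X) : ℂ := exp (I * θ x y)

theorem norm_magneticPhase (θ : X → X → ℝ) (x y : X) : ‖magneticPhase θ x y‖ = 1 := by
  rw [magneticPhase, mul_comm, norm_exp_ofReal_mul_I]

theorem conj_magneticPhase {θ : X → X → ℝ} (hθ : ∀ x y, θ x y = -θ y x) (x y : X) :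
    conj (magneticPhase θ x y) = magneticPhase θ y x := by
  rw [magneticPhase, magneticPhase, ← exp_conj, map_mul, conj_I, conj_ofReal, hθ, ofReal_neg]
  ring_nf

theorem magneticSchrodingerOp_mul_conj_mul (b θ : X → X → ℝ) (v : X → ℝ) (f g : X → ℂ) {x : X}
    (hm : m x ≠ 0) :
    magneticSchrodingerOp b m θ v f x * conj (g x) * m x =
      ∑' y, (b x y : ℂ) * magneticDiff (magneticPhase θ) f x y * conj (g x) +
        v x * f x * conj (g x) * m x := by
  have hm' : (m x : ℂ) ≠ 0 := ofReal_ne_zero.2 hm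
  rw [tsum_mul_right]
  simp only [magneticSchrodingerOp, magneticDiff, magneticPhase, ofReal_inv]
  field_simp

theorem mul_conj_magneticSchrodingerOp_mul (b θ : X → X → ℝ) (v : X → ℝ) (f g : X → ℂ) {x : X}
    (hm : m x ≠ 0) :
    f x * conj (magneticSchrodingerOp b m θ v g x) * m x =
      ∑' y, (b x y : ℂ) * f x * conj (magneticDiff (magneticPhase θ) g x y) +
        v x * f x * conj (g x) * m x := by
  have hm' : (m x : ℂ) ≠ 0 := ofReal_ne_zero.2 hm
  simp_rw [mul_assoc _ (f x), mul_left_comm _ (f x), tsum_mul_left]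
  simp only [magneticSchrodingerOp, magneticDiff, magneticPhase, map_add, map_mul,
    map_inv₀, conj_tsum, conj_ofReal, ofReal_inv]
  field_simp

theorem tsum_magneticSchrodingerOp_mul_conj_mul (b θ : X → X → ℝ) (v : X → ℝ) (f g : X → ℂ)
    (hm : ∀ x, m x ≠ 0)
    (hsum : Summable fun p : X × X =>
      ‖(b p.1 p.2 : ℂ) * magneticDiff (magneticPhase θ) f p.1 p.2 * conj (g p.1)‖)
    (hpot : Summable fun x => ‖v x * f x * conj (g x) * m x‖) :
    ∑' x, magneticSchrodingerOp b m θ v f x * conj (g x) * m x =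
      ∑' p : X × X, (b p.1 p.2 : ℂ) * magneticDiff (magneticPhase θ) f p.1 p.2 * conj (g p.1) +
        ∑' x, v x * f x * conj (g x) * m x := by
  rw [tsum_congr fun x => magneticSchrodingerOp_mul_conj_mul b θ v f g (hm x),
    hsum.of_norm.prod.tsum_add hpot.of_norm, hsum.of_norm.tsum_prod]

theorem tsum_mul_conj_magneticSchrodingerOp_mul (b θ : X → X → ℝ) (v : X → ℝ) (f g : X → ℂ)
    (hm : ∀ x, m x ≠ 0)
    (hsum : Summable fun p : X × X =>
      ‖(b p.1 p.2 : ℂ) * f p.1 * conj (magneticDiff (magneticPhase θ) g p.1 p.2)‖)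
    (hpot : Summable fun x => ‖v x * f x * conj (g x) * m x‖) :
    ∑' x, f x * conj (magneticSchrodingerOp b m θ v g x) * m x =
      ∑' p : X × X, (b p.1 p.2 : ℂ) * f p.1 * conj (magneticDiff (magneticPhase θ) g p.1 p.2) +
        ∑' x, v x * f x * conj (g x) * m x := by
  rw [tsum_congr fun x => mul_conj_magneticSchrodingerOp_mul b θ v f g (hm x),
    hsum.of_norm.prod.tsum_add hpot.of_norm, hsum.of_norm.tsum_prod]

theorem summable_norm_mul_conj_magneticSchrodingerOp_mul (b θ : X → X → ℝ) (v : X → ℝ)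
    (f g : X → ℂ) (hm : ∀ x, m x ≠ 0)
    (hsum : Summable fun p : X × X =>
      ‖(b p.1 p.2 : ℂ) * f p.1 * conj (magneticDiff (magneticPhase θ) g p.1 p.2)‖)
    (hpot : Summable fun x => ‖v x * f x * conj (g x) * m x‖) :
    Summable fun x => ‖f x * conj (magneticSchrodingerOp b m θ v g x) * m x‖ :=
  ((summable_norm_tsum_fiber hsum).add hpot).of_nonneg_of_le (fun _ => norm_nonneg _) fun x => by
    rw [mul_conj_magneticSchrodingerOp_mul b θ v f g (hm x)]
    exact norm_add_le _ _

end Operator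

theorem greens_formula_general {X : Type*}
    (b : X → X → ℝ) (m : X → ℝ) (θ : X → X → ℝ) (v : X → ℝ)
    (hb_symm : ∀ x y, b x y = b y x) (hb_nonneg : ∀ x y, 0 ≤ b x y)
    (hb_sum : ∀ x, Summable fun y => b x y)
    (hm : ∀ x, 0 < m x) (hθ : ∀ x y, θ x y = - θ y x)
    (f g : X → ℂ)
    (hf : ∀ x, Summable fun y => b x y * ‖f y‖)
    (hg : (Function.support g).Finite) :
    -- absolute convergence of all the sums involved:
    (Summable fun x =>
      ‖magneticSchrodingerOp b m θ v f x * (starRingEnd ℂ) (g x) * (m x)‖) ∧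
    (Summable fun x =>
      ‖f x * (starRingEnd ℂ) (magneticSchrodingerOp b m θ v g x) * (m x)‖) ∧
    (Summable fun p : X × X =>
      ‖(b p.1 p.2 : ℂ) * (f p.1 - Complex.exp (Complex.I * (θ p.1 p.2)) * f p.2) *
        (starRingEnd ℂ) (g p.1 - Complex.exp (Complex.I * (θ p.1 p.2)) * g p.2)‖) ∧
    (Summable fun x => ‖v x * f x * (starRingEnd ℂ) (g x) * (m x)‖) ∧
    -- the equalities:
    (∑' x, magneticSchrodingerOp b m θ v f x * (starRingEnd ℂ) (g x) * (m x)
      = ∑' x, f x * (starRingEnd ℂ) (magneticSchrodingerOp b m θ v g x) * (m x)) ∧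
    (∑' x, magneticSchrodingerOp b m θ v f x * (starRingEnd ℂ) (g x) * (m x)
      = (1/2) * (∑' p : X × X,
          (b p.1 p.2 : ℂ) * (f p.1 - Complex.exp (Complex.I * (θ p.1 p.2)) * f p.2) *
            (starRingEnd ℂ) (g p.1 - Complex.exp (Complex.I * (θ p.1 p.2)) * g p.2))
        + ∑' x, v x * f x * (starRingEnd ℂ) (g x) * (m x)) := by
  have hm' : ∀ x, m x ≠ 0 := fun x => (hm x).ne'
  have hdiff := norm_magneticDiff_le (norm_magneticPhase θ)
  have hle : ∀ (u : X → ℂ) (p : X × X), ‖u p.1‖ ≤ ‖u p.1‖ + ‖u p.2‖ :=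
    fun _ _ => le_add_of_nonneg_right (norm_nonneg _)
  have hleft := summable_norm_ofReal_mul_mul_conj hb_symm hb_nonneg hb_sum hf hg
    (fun p => hdiff f p.1 p.2) (hle g)
  have hright := summable_norm_ofReal_mul_mul_conj hb_symm hb_nonneg hb_sum hf hg
    (hle f) (fun p => hdiff g p.1 p.2)
  have hpot := summable_norm_mul_conj_mul_of_finite hg (fun x => v x * f x) (fun x => m x)
  have hsumL := tsum_magneticSchrodingerOp_mul_conj_mul b θ v f g hm' hleft hpot
  have hsumR := tsum_mul_conj_magneticSchrodingerOp_mul b θ v f g hm' hright hpot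
  have hQL := tsum_ofReal_mul_magneticDiff_mul_conj_magneticDiff_eq_left hb_symm
    (norm_magneticPhase θ) (conj_magneticPhase hθ) hleft.of_norm
  have hQR := tsum_ofReal_mul_magneticDiff_mul_conj_magneticDiff_eq_right hb_symm
    (norm_magneticPhase θ) (conj_magneticPhase hθ) hright.of_norm
  refine ⟨summable_norm_mul_conj_mul_of_finite hg _ _,
    summable_norm_mul_conj_magneticSchrodingerOp_mul b θ v f g hm' hright hpot,
    summable_norm_ofReal_mul_mul_conj hb_symm hb_nonneg hb_sum hf hg
      (fun p => hdiff f p.1 p.2) (fun p => hdiff g p.1 p.2), hpot, ?_, ?_⟩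
  · rw [hsumL, hsumR, mul_left_cancel₀ two_ne_zero (hQL.symm.trans hQR)]
  · simp only [magneticDiff, magneticPhase] at hsumL hQL
    rw [hsumL, hQL]
    ring

/-- **Green's formula** for the formal magnetic Schrödinger operator. -/
theorem greens_formula {X : Type*} [Countable X]
    (b : X → X → ℝ) (m : X → ℝ) (θ : X → X → ℝ) (v : X → ℝ)
    (hb_symm : ∀ x y, b x y = b y x) (hb_nonneg : ∀ x y, 0 ≤ b x y)
    (hb_diag : ∀ x, b x x = 0) (hb_sum : ∀ x, Summable fun y => b x y)
    (hm : ∀ x, 0 < m x) (hθ : ∀ x y, θ x y = - θ y x)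
    (f g : X → ℂ)
    (hf : ∀ x, Summable fun y => b x y * ‖f y‖)
    (hg : (Function.support g).Finite) :
    -- absolute convergence of all the sums involved:
    (Summable fun x =>
      ‖magneticSchrodingerOp b m θ v f x * (starRingEnd ℂ) (g x) * (m x)‖) ∧
    (Summable fun x =>
      ‖f x * (starRingEnd ℂ) (magneticSchrodingerOp b m θ v g x) * (m x)‖) ∧
    (Summable fun p : X × X =>
      ‖(b p.1 p.2 : ℂ) * (f p.1 - Complex.exp (Complex.I * (θ p.1 p.2)) * f p.2) *
        (starRingEnd ℂ) (g p.1 - Complex.exp (Complex.I * (θ p.1 p.2)) * g p.2)‖) ∧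
    (Summable fun x => ‖v x * f x * (starRingEnd ℂ) (g x) * (m x)‖) ∧
    -- the equalities:
    (∑' x, magneticSchrodingerOp b m θ v f x * (starRingEnd ℂ) (g x) * (m x)
      = ∑' x, f x * (starRingEnd ℂ) (magneticSchrodingerOp b m θ v g x) * (m x)) ∧
    (∑' x, magneticSchrodingerOp b m θ v f x * (starRingEnd ℂ) (g x) * (m x)
      = (1/2) * (∑' p : X × X,
          (b p.1 p.2 : ℂ) * (f p.1 - Complex.exp (Complex.I * (θ p.1 p.2)) * f p.2) *
            (starRingEnd ℂ) (g p.1 - Complex.exp (Complex.I * (θ p.1 p.2)) * g p.2))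
        + ∑' x, v x * f x * (starRingEnd ℂ) (g x) * (m x)) :=
  greens_formula_general b m θ v hb_symm hb_nonneg hb_sum hm hθ f g hf hg
end

section
/- (Kato–Simon estimate, finite graphs) Let (X,b,m) be a weighted graph with X finite, θ a magnetic potential and v an electric potential on X. Then for all t ≥ 0 and all x,y ∈ X one has |exp(−itL_{v,θ})(x,y)| ≤ exp(−tL_{−deg,0})(x,y), where L_{−deg,0} is the operator obtained by replacing v by −deg and θ by 0. -/
/-!
If `B ≥ 0` entrywise, `‖A x y‖ ≤ B x y` for `x ≠ y` and `re (A x x) ≤ B x x`, then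
`‖exp A‖ ≤ exp B` entrywise. Write the exponentials as limits of `(1 + A/n)^n`: off the diagonal
`1 + A/n` is dominated by `1 + B/n`, and a diagonal entry `1 + a/n` with `re a ≤ β` has modulus
at most `1 + β/n + ‖a‖²/(2n²)`. So `‖1 + A/n‖ ≤ (1 + c/n²)(1 + B/n)` entrywise for a constant
`c`, this passes to `n`-th powers as `1 + B/n` has nonnegative entries, and `(1 + c/n²)^n → 1`.
For `A = -itL_{v,θ}` and `B = -tL_{-deg,0}` the potential only contributes the purely imaginary
diagonal `-it(deg + v)`, and the hopping terms `itb(x,y)e^{iθ(x,y)}/m(x)` have modulus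
`tb(x,y)/m(x)`.
-/

open Complex

noncomputable section

/-- The weighted degree function `deg(x) = (1/m(x)) ∑_y b(x,y)` on a finite weighted graph. -/
def degree {X : Type*} [Fintype X] (b : X → X → ℝ) (m : X → ℝ) (x : X) : ℝ :=
  (∑ y, b x y) / m x

/-- The matrix of the magnetic Schrödinger operator `L_{v,θ}` on `ℓ²(X,m)`, `X` finite:
`(L_{v,θ}f)(x) = (1/m(x)) ∑_y b(x,y)(f(x) - e^{iθ(x,y)}f(y)) + v(x)f(x)`, i.e.
`L_{v,θ}f = M.mulVec f` for the matrix `M` below. -/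
def magneticMatrix {X : Type*} [Fintype X] [DecidableEq X] (b : X → X → ℝ) (m : X → ℝ)
    (θ : X → X → ℝ) (v : X → ℝ) : Matrix X X ℂ := fun x y =>
  (if x = y then ((degree b m x + v x : ℝ) : ℂ) else 0)
    - ((b x y / m x : ℝ) : ℂ) * Complex.exp (Complex.I * (θ x y))

/-- The (real) matrix of the Schrödinger operator `L_{v,0}` (no magnetic potential). -/
def schrodingerMatrix {X : Type*} [Fintype X] [DecidableEq X] (b : X → X → ℝ) (m : X → ℝ)
    (v : X → ℝ) : Matrix X X ℝ := fun x y =>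
  (if x = y then degree b m x + v x else 0) - b x y / m x

open Filter Topology

theorem Nat.choose_div_pow_le_inv_factorial (n k : ℕ) :
    (n.choose k : ℝ) / (n : ℝ) ^ k ≤ (k.factorial : ℝ)⁻¹ :=
  calc (n.choose k : ℝ) / (n : ℝ) ^ k ≤ (n : ℝ) ^ k / k.factorial / (n : ℝ) ^ k := by
        gcongr; exact Nat.choose_le_pow_div k n
    _ = (n : ℝ) ^ k / (n : ℝ) ^ k / k.factorial := div_right_comm _ _ _
    _ ≤ 1 / k.factorial := by gcongr; exact div_self_le_one _
    _ = (k.factorial : ℝ)⁻¹ := one_div _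

theorem one_add_inv_smul_pow_eq_tsum {𝔸 : Type*} [Ring 𝔸] [Algebra ℝ 𝔸] [TopologicalSpace 𝔸]
    (x : 𝔸) (n : ℕ) :
    (1 + (n : ℝ)⁻¹ • x) ^ n = ∑' k, ((n.choose k : ℝ) * (n : ℝ)⁻¹ ^ k) • x ^ k := by
  rw [tsum_eq_sum (s := Finset.range (n + 1)) fun k hk => by
    rw [Nat.choose_eq_zero_of_lt (by simpa using hk), Nat.cast_zero, zero_mul, zero_smul],
    add_comm, (Commute.one_right _).add_pow]
  refine Finset.sum_congr rfl fun k _ => ?_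
  rw [one_pow, mul_one, smul_pow, ← Nat.cast_comm, ← nsmul_eq_mul, ← Nat.cast_smul_eq_nsmul ℝ,
    smul_smul]

theorem tendsto_one_add_inv_smul_pow_exp {𝔸 : Type*} [NormedRing 𝔸] [NormedAlgebra ℝ 𝔸]
    [CompleteSpace 𝔸] (x : 𝔸) :
    Tendsto (fun n : ℕ => (1 + (n : ℝ)⁻¹ • x) ^ n) atTop (𝓝 (NormedSpace.exp x)) := by
  simp only [one_add_inv_smul_pow_eq_tsum, NormedSpace.exp_eq_tsum ℝ]
  refine tendsto_tsum_of_dominated_convergence (NormedSpace.norm_expSeries_summable' (𝕂 := ℝ) x)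
    (fun k => ?_) (.of_forall fun n k => ?_)
  · have hcoeff := ProbabilityTheory.tendsto_choose_mul_pow_atTop
      (p := fun n : ℕ => (n : ℝ)⁻¹) (r := 1) k <| tendsto_const_nhds.congr' <| by
        filter_upwards [eventually_ne_atTop 0] with n hn
        simp [hn]
    simpa using hcoeff.smul_const (x ^ k)
  · rw [norm_smul, norm_smul, Real.norm_of_nonneg (by positivity),
      Real.norm_of_nonneg (by positivity), inv_pow, ← div_eq_mul_inv]
    gcongr
    exact Nat.choose_div_pow_le_inv_factorial n k

theorem Complex.norm_one_add_le_of_re_le {z : ℂ} {β : ℝ} (hβ : 0 ≤ β) (hz : z.re ≤ β) :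
    ‖1 + z‖ ≤ 1 + β + ‖z‖ ^ 2 / 2 := by
  have hsq : ‖1 + z‖ ^ 2 = 1 + 2 * z.re + ‖z‖ ^ 2 := by
    rw [Complex.sq_norm, Complex.sq_norm, Complex.normSq_add, map_one]
    simp only [one_mul, Complex.conj_re]
    ring
  refine le_of_pow_le_pow_left₀ two_ne_zero (by positivity) ?_
  rw [hsq]
  nlinarith [sq_nonneg (β + ‖z‖ ^ 2 / 2)]

section
variable {X : Type*} [Fintype X] [DecidableEq X]

theorem Matrix.norm_pow_apply_le {α : Type*} [SeminormedRing α] [NormOneClass α]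
    {P : Matrix X X α} {Q : Matrix X X ℝ}
    (h : ∀ i j, ‖P i j‖ ≤ Q i j) (n : ℕ) (i j : X) : ‖(P ^ n) i j‖ ≤ (Q ^ n) i j := by
  induction n generalizing i j with
  | zero => by_cases hij : i = j <;> simp [hij]
  | succ n ih =>
    rw [pow_succ, pow_succ, Matrix.mul_apply, Matrix.mul_apply]
    refine (norm_sum_le _ _).trans (Finset.sum_le_sum fun k _ => ?_)
    exact (norm_mul_le _ _).trans
      (mul_le_mul (ih i k) (h k j) (norm_nonneg _) ((norm_nonneg _).trans (ih i k)))

theorem Matrix.norm_one_add_smul_apply_le {A : Matrix X X ℂ} {B : Matrix X X ℝ}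
    (hB : ∀ i j, 0 ≤ B i j) (hoff : ∀ i j, i ≠ j → ‖A i j‖ ≤ B i j)
    (hdiag : ∀ i, (A i i).re ≤ B i i) {s : ℝ} (hs : 0 ≤ s) (i j : X) :
    ‖(1 + s • A) i j‖ ≤ (1 + s ^ 2 * ∑ k, ‖A k k‖ ^ 2) * (1 + s • B) i j := by
  have hc : 0 ≤ s ^ 2 * ∑ k, ‖A k k‖ ^ 2 := by positivity
  rcases eq_or_ne i j with rfl | hij
  · have hre : (s • A i i).re ≤ s * B i i := by
      rw [Complex.smul_re]; exact mul_le_mul_of_nonneg_left (hdiag i) hs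
    have hsq : ‖s • A i i‖ ^ 2 ≤ s ^ 2 * ∑ k, ‖A k k‖ ^ 2 := by
      rw [norm_smul, mul_pow, Real.norm_of_nonneg hs]
      gcongr
      exact Finset.single_le_sum (f := fun k => ‖A k k‖ ^ 2) (fun _ _ => by positivity)
        (Finset.mem_univ i)
    have := Complex.norm_one_add_le_of_re_le (mul_nonneg hs (hB i i)) hre
    simp only [Matrix.add_apply, Matrix.one_apply_eq, Matrix.smul_apply, smul_eq_mul] at this ⊢
    nlinarith [mul_nonneg hc (mul_nonneg hs (hB i i))]
  · simp only [Matrix.add_apply, Matrix.one_apply_ne hij, zero_add, Matrix.smul_apply,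
      smul_eq_mul, norm_smul, Real.norm_of_nonneg hs]
    exact (mul_le_mul_of_nonneg_left (hoff i j hij) hs).trans
      (le_mul_of_one_le_left (mul_nonneg hs (hB i j)) (le_add_of_nonneg_right hc))

theorem Matrix.tendsto_one_add_inv_smul_pow_exp_apply {𝕜 : Type*} [RCLike 𝕜]
    (A : Matrix X X 𝕜) (i j : X) :
    Tendsto (fun n : ℕ => ((1 + (n : ℝ)⁻¹ • A) ^ n) i j) atTop (𝓝 (NormedSpace.exp A i j)) := by
  let := Matrix.linftyOpNormedRing (n := X) (α := 𝕜)
  let := Matrix.linftyOpNormedAlgebra (R := ℝ) (n := X) (α := 𝕜)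
  exact ((tendsto_one_add_inv_smul_pow_exp A).apply_nhds i).apply_nhds j

theorem Matrix.norm_exp_apply_le {A : Matrix X X ℂ} {B : Matrix X X ℝ}
    (hB : ∀ i j, 0 ≤ B i j) (hoff : ∀ i j, i ≠ j → ‖A i j‖ ≤ B i j)
    (hdiag : ∀ i, (A i i).re ≤ B i i) (i j : X) :
    ‖NormedSpace.exp A i j‖ ≤ NormedSpace.exp B i j := by
  set c := ∑ k, ‖A k k‖ ^ 2
  have hfactor : Tendsto (fun n : ℕ => (1 + (n : ℝ)⁻¹ ^ 2 * c) ^ n) atTop (𝓝 1) := by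
    have h := Real.tendsto_one_add_pow_exp_of_tendsto
      (g := fun n : ℕ => (n : ℝ)⁻¹ ^ 2 * c) (t := 0) ?_
    · rwa [Real.exp_zero] at h
    refine (zero_mul c ▸ tendsto_inv_atTop_nhds_zero_nat.mul_const c).congr' ?_
    filter_upwards [eventually_ne_atTop 0] with n hn
    field_simp
  refine le_of_tendsto_of_tendsto' (tendsto_one_add_inv_smul_pow_exp_apply A i j).norm
    (by simpa only [one_mul] using hfactor.mul (tendsto_one_add_inv_smul_pow_exp_apply B i j))
    fun n => ?_
  calc _ ≤ (((1 + (n : ℝ)⁻¹ ^ 2 * c) • (1 + (n : ℝ)⁻¹ • B) : Matrix X X ℝ) ^ n) i j :=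
        Matrix.norm_pow_apply_le (fun i j =>
          norm_one_add_smul_apply_le hB hoff hdiag (by positivity) i j) n i j
    _ = _ := by rw [smul_pow, Matrix.smul_apply, smul_eq_mul]

end

theorem kato_simon_finite_general {X : Type*} [Fintype X] [DecidableEq X]
    (b : X → X → ℝ) (m : X → ℝ) (θ : X → X → ℝ) (v : X → ℝ)
    (hb_nonneg : ∀ x y, 0 ≤ b x y)
    (hm : ∀ x, 0 < m x)
    (t : ℝ) (ht : 0 ≤ t) (x y : X) :
    ‖((NormedSpace.exp ((-(Complex.I * (t : ℂ))) • magneticMatrix b m θ v)) x y / (m y))‖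
      ≤ (NormedSpace.exp ((-t) • schrodingerMatrix b m (fun z => - degree b m z))) x y
          / m y := by
  set A : Matrix X X ℂ := (-(Complex.I * (t : ℂ))) • magneticMatrix b m θ v
  set B : Matrix X X ℝ := (-t) • schrodingerMatrix b m (fun z => - degree b m z)
  set hopping : X → X → ℂ := fun i j =>
    Complex.I * t * (b i j / m i : ℝ) * Complex.exp (Complex.I * θ i j)
  have hA : ∀ i j,
      A i j = (if i = j then -(Complex.I * t) * (degree b m i + v i : ℝ) else 0) + hopping i j := by
    intro i j
    by_cases hij : i = j <;> simp [A, magneticMatrix, hopping, hij] <;> ring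
  have hB : ∀ i j, B i j = t * (b i j / m i) := by
    intro i j
    by_cases hij : i = j <;> simp [B, schrodingerMatrix, hij]
  have hnorm : ∀ i j, ‖hopping i j‖ = t * (b i j / m i) := by
    intro i j
    rw [norm_mul, norm_mul, norm_mul, Complex.norm_I, Complex.norm_real, Complex.norm_real,
      Complex.norm_exp_I_mul_ofReal, one_mul, mul_one, Real.norm_of_nonneg ht,
      Real.norm_of_nonneg (div_nonneg (hb_nonneg i j) (hm i).le)]
  have hkernel : ‖NormedSpace.exp A x y‖ ≤ NormedSpace.exp B x y :=
    Matrix.norm_exp_apply_le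
      (fun i j => (hB i j).symm ▸ mul_nonneg ht (div_nonneg (hb_nonneg i j) (hm i).le))
      (fun i j hij => by rw [hA, hB, if_neg hij, zero_add, hnorm])
      (fun i => by
        rw [hA, hB, if_pos rfl, ← hnorm, Complex.add_re]
        simpa using Complex.re_le_norm (hopping i i)) x y
  rw [norm_div, Complex.norm_real, Real.norm_of_nonneg (hm y).le]
  exact div_le_div_of_nonneg_right hkernel (hm y).le

/-- **Kato–Simon estimate on finite graphs**: for all `t ≥ 0` and all vertices `x,y`,
`|exp(-itL_{v,θ})(x,y)| ≤ exp(-tL_{-deg,0})(x,y)`, where the kernel of an operator `A` on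
`ℓ²(X,m)` is `A(x,y) = (Aδ_y)(x)/m(y)`. -/
theorem kato_simon_finite {X : Type*} [Fintype X] [DecidableEq X]
    (b : X → X → ℝ) (m : X → ℝ) (θ : X → X → ℝ) (v : X → ℝ)
    (hb_symm : ∀ x y, b x y = b y x) (hb_nonneg : ∀ x y, 0 ≤ b x y)
    (hb_diag : ∀ x, b x x = 0) (hm : ∀ x, 0 < m x)
    (hθ : ∀ x y, θ x y = - θ y x)
    (t : ℝ) (ht : 0 ≤ t) (x y : X) :
    ‖((NormedSpace.exp ((-(Complex.I * (t : ℂ))) • magneticMatrix b m θ v)) x y / (m y))‖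
      ≤ (NormedSpace.exp ((-t) • schrodingerMatrix b m (fun z => - degree b m z))) x y
          / m y :=
  kato_simon_finite_general b m θ v hb_nonneg hm t ht x y
end
end

section
/- (Semigroup domination, finite graphs) Let (X,b,m) be a weighted graph with X finite, θ a magnetic potential and v an electric potential on X. Then for all t ≥ 0 and all x,y ∈ X one has |exp(−tL_{v,θ})(x,y)| ≤ exp(−tL_{v,0})(x,y). -/
open Complex

noncomputable section

/-!
Choose `c ≥ t (deg z + v z)` for all `z`. Then `c - t L_{v,0}` has nonnegative entries, and
`|(c - t L_{v,θ})(x,y)| ≤ (c - t L_{v,0})(x,y)` entrywise, since the phases `e^{iθ(x,y)}` have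
modulus one. Entrywise domination passes to matrix powers and hence to the exponential series,
and the shift by `c` multiplies both exponentials by the same factor `e^c`.
-/

namespace Matrix

variable {n 𝕜 : Type*} [Fintype n] [DecidableEq n] [RCLike 𝕜]

theorem exp_smul_one_add (c : ℝ) (A : Matrix n n 𝕜) :
    NormedSpace.exp (c • (1 : Matrix n n 𝕜) + A) = Real.exp c • NormedSpace.exp A := by
  open scoped Norms.Operator in
  have hc : NormedSpace.exp (c • (1 : Matrix n n 𝕜)) = Real.exp c • 1 := by
    rw [← Algebra.algebraMap_eq_smul_one, ← Algebra.algebraMap_eq_smul_one, Real.exp_eq_exp_ℝ]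
    exact (NormedSpace.algebraMap_exp_comm c).symm
  rw [exp_add_of_commute _ _ ((Commute.one_left A).smul_left c), hc, smul_one_mul]

theorem norm_pow_apply_le_s7 {A : Matrix n n 𝕜} {S : Matrix n n ℝ} (h : ∀ i j, ‖A i j‖ ≤ S i j)
    (k : ℕ) (i j : n) : ‖(A ^ k) i j‖ ≤ (S ^ k) i j := by
  induction k generalizing j with
  | zero => by_cases hij : i = j <;> simp [hij]
  | succ k ih =>
    rw [pow_succ, pow_succ, mul_apply, mul_apply]
    refine (norm_sum_le _ _).trans (Finset.sum_le_sum fun l _ => ?_)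
    rw [norm_mul]
    exact mul_le_mul (ih l) (h l j) (norm_nonneg _) ((norm_nonneg _).trans (ih l))

theorem hasSum_exp_apply (A : Matrix n n 𝕜) (i j : n) :
    HasSum (fun k : ℕ => (k.factorial⁻¹ : 𝕜) * (A ^ k) i j) (NormedSpace.exp A i j) := by
  open scoped Norms.Operator in
  exact Pi.hasSum.mp (Pi.hasSum.mp (NormedSpace.exp_series_hasSum_exp' (𝕂 := 𝕜) A) i) j

theorem norm_exp_apply_le_s7 {A : Matrix n n 𝕜} {S : Matrix n n ℝ} (h : ∀ i j, ‖A i j‖ ≤ S i j)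
    (i j : n) : ‖NormedSpace.exp A i j‖ ≤ NormedSpace.exp S i j := by
  refine (hasSum_exp_apply A i j).norm_le_of_bounded (hasSum_exp_apply S i j) fun k => ?_
  rw [norm_mul, norm_inv, RCLike.norm_natCast]
  exact mul_le_mul_of_nonneg_left (norm_pow_apply_le_s7 h k i j) (by positivity)

theorem norm_exp_apply_le_of_shift {A : Matrix n n 𝕜} {S : Matrix n n ℝ} (c : ℝ)
    (h : ∀ i j, ‖(c • (1 : Matrix n n 𝕜) + A) i j‖ ≤ (c • (1 : Matrix n n ℝ) + S) i j) (i j : n) :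
    ‖NormedSpace.exp A i j‖ ≤ NormedSpace.exp S i j := by
  have hexp := norm_exp_apply_le_s7 h i j
  rw [exp_smul_one_add, exp_smul_one_add, smul_apply, smul_apply, norm_smul, Real.norm_eq_abs,
    abs_of_pos (Real.exp_pos c), smul_eq_mul] at hexp
  exact le_of_mul_le_mul_left hexp (Real.exp_pos c)

end Matrix

theorem norm_smul_one_add_neg_smul_magneticMatrix_apply_le {X : Type*} [Fintype X]
    [DecidableEq X] {b : X → X → ℝ} {m : X → ℝ} (θ : X → X → ℝ) (v : X → ℝ)
    (hb_nonneg : ∀ x y, 0 ≤ b x y) (hm : ∀ x, 0 < m x) {t c : ℝ} (ht : 0 ≤ t)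
    (hc : ∀ z, t * (degree b m z + v z) ≤ c) (x y : X) :
    ‖(c • (1 : Matrix X X ℂ) + (-(t : ℂ)) • magneticMatrix b m θ v) x y‖
      ≤ (c • (1 : Matrix X X ℝ) + (-t) • schrodingerMatrix b m v) x y := by
  set d : ℝ := if x = y then c - t * (degree b m x + v x) else 0
  set w : ℝ := t * (b x y / m x)
  have hA : (c • (1 : Matrix X X ℂ) + (-(t : ℂ)) • magneticMatrix b m θ v) x y
      = d + w * Complex.exp (θ x y * I) := by
    by_cases hxy : x = y <;> simp [d, w, hxy, magneticMatrix, mul_comm I] <;> ring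
  have hS : (c • (1 : Matrix X X ℝ) + (-t) • schrodingerMatrix b m v) x y = d + w := by
    by_cases hxy : x = y
    · simp [d, w, hxy, schrodingerMatrix]
      ring
    · simp [d, w, hxy, schrodingerMatrix]
  have hd : 0 ≤ d := by
    simp only [d]
    split_ifs <;> linarith [hc x]
  have hw : 0 ≤ w := mul_nonneg ht (div_nonneg (hb_nonneg x y) (hm x).le)
  rw [hA, hS]
  calc ‖(d : ℂ) + w * Complex.exp (θ x y * I)‖
      ≤ ‖(d : ℂ)‖ + ‖(w : ℂ) * Complex.exp (θ x y * I)‖ := norm_add_le _ _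
    _ = d + w := by
      rw [norm_mul, norm_exp_ofReal_mul_I, mul_one, Complex.norm_of_nonneg hd,
        Complex.norm_of_nonneg hw]

theorem semigroup_domination_finite_general {X : Type*} [Fintype X] [DecidableEq X]
    (b : X → X → ℝ) (m : X → ℝ) (θ : X → X → ℝ) (v : X → ℝ)
    (hb_nonneg : ∀ x y, 0 ≤ b x y) (hm : ∀ x, 0 < m x)
    (t : ℝ) (ht : 0 ≤ t) (x y : X) :
    ‖(NormedSpace.exp ((-(t : ℂ)) • magneticMatrix b m θ v)) x y / (m y)‖
      ≤ (NormedSpace.exp ((-t) • schrodingerMatrix b m v)) x y / m y := by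
  obtain ⟨c, hc⟩ := Finite.exists_le fun z => t * (degree b m z + v z)
  rw [norm_div, Complex.norm_real, Real.norm_of_nonneg (hm y).le]
  exact div_le_div_of_nonneg_right (Matrix.norm_exp_apply_le_of_shift c
    (norm_smul_one_add_neg_smul_magneticMatrix_apply_le θ v hb_nonneg hm ht hc) x y) (hm y).le

/-- **Semigroup domination on finite graphs**: for all `t ≥ 0` and all vertices `x,y`,
`|exp(-tL_{v,θ})(x,y)| ≤ exp(-tL_{v,0})(x,y)`, where the kernel of an operator `A` on
`ℓ²(X,m)` is `A(x,y) = (Aδ_y)(x)/m(y)`. -/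
theorem semigroup_domination_finite {X : Type*} [Fintype X] [DecidableEq X]
    (b : X → X → ℝ) (m : X → ℝ) (θ : X → X → ℝ) (v : X → ℝ)
    (hb_symm : ∀ x y, b x y = b y x) (hb_nonneg : ∀ x y, 0 ≤ b x y)
    (hb_diag : ∀ x, b x x = 0) (hm : ∀ x, 0 < m x)
    (hθ : ∀ x y, θ x y = - θ y x)
    (t : ℝ) (ht : 0 ≤ t) (x y : X) :
    ‖(NormedSpace.exp ((-(t : ℂ)) • magneticMatrix b m θ v)) x y / (m y)‖
      ≤ (NormedSpace.exp ((-t) • schrodingerMatrix b m v)) x y / m y :=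
  semigroup_domination_finite_general b m θ v hb_nonneg hm t ht x y
end
end

section
/- Let c ∈ ℝ. The complex linear span of the family of functions {x ↦ exp(−ax) : a > 0}, viewed as elements of the space C₀([c,∞)) of continuous complex-valued functions on [c,∞) vanishing at infinity, is dense in C₀([c,∞)) with respect to the supremum norm. -/
/-!
The map `x ↦ exp (-x)` identifies `[c, ∞)` with `s \ {0}`, where `s = [0, exp (-c)] ⊆ ℂ`, so `s` is
the one-point compactification of `[c, ∞)` with `0` as the point at infinity. Precomposition with
this map is therefore a continuous surjection `C(s, ℂ)₀ → C₀([c, ∞), ℂ)` of star algebras sending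
the identity of `s` to `exp (-x)`. The non-unital Weierstrass theorem (the star algebra generated
by the identity is dense in `C(s, ℂ)₀`) thus transfers to density of the star algebra generated by
`exp (-x)`, which is spanned by the functions `exp (-n x)`, `n ≥ 1`.
-/

open Filter Topology Set Function OnePoint ZeroAtInfty
open scoped ContinuousMapZero

variable {X : Type*} [TopologicalSpace X]

namespace ZeroAtInftyContinuousMap

variable [R1Space X] {R : Type*} [TopologicalSpace R] [Zero R]

def toOnePoint (g : C₀(X, R)) : C(OnePoint X, R) where
  toFun p := p.elim 0 g
  continuous_toFun := (OnePoint.continuous_iff _).2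
    ⟨by simpa using zero_at_infty g, map_continuous g⟩

@[simp] lemma toOnePoint_infty (g : C₀(X, R)) : g.toOnePoint ∞ = 0 := rfl

@[simp] lemma toOnePoint_coe (g : C₀(X, R)) (x : X) : g.toOnePoint x = g x := rfl

end ZeroAtInftyContinuousMap

namespace ContinuousMapZero

variable {Y 𝕜 : Type*} [TopologicalSpace Y] [Zero Y] [RCLike 𝕜]

def precompZeroAtInfty (τ : C(X, Y)) (hτ : Tendsto τ (cocompact X) (𝓝 0)) :
    C(Y, 𝕜)₀ →⋆ₙₐ[𝕜] C₀(X, 𝕜) where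
  toFun f := ⟨(f : C(Y, 𝕜)).comp τ, by
    simpa using ((map_continuous f).tendsto 0).comp hτ⟩
  map_smul' _ _ := rfl
  map_zero' := rfl
  map_add' _ _ := rfl
  map_mul' _ _ := rfl
  map_star' _ := rfl

variable [CompactSpace Y]

lemma continuous_precompZeroAtInfty (τ : C(X, Y)) (hτ : Tendsto τ (cocompact X) (𝓝 0)) :
    Continuous (precompZeroAtInfty (𝕜 := 𝕜) τ hτ) := by
  refine AddMonoidHomClass.continuous_of_bound _ 1 fun f => ?_
  rw [one_mul, ← ZeroAtInftyContinuousMap.norm_toBCF_eq_norm, norm_def]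
  exact BoundedContinuousFunction.norm_le (norm_nonneg _) |>.2 fun x =>
    (f : C(Y, 𝕜)).norm_coe_le_norm (τ x)

lemma precompZeroAtInfty_surjective [T2Space Y] {τ : C(X, Y)}
    (hτ : Tendsto τ (cocompact X) (𝓝 0)) (hemb : IsEmbedding τ) (hrange : range τ = {0}ᶜ) :
    Surjective (precompZeroAtInfty (𝕜 := 𝕜) τ hτ) := by
  intro g
  have := hemb.t2Space
  let e := equivOfIsEmbeddingOfRangeEq 0 τ hemb hrange
  have he : e.symm 0 = ∞ := e.symm_apply_eq.2 rfl
  refine ⟨⟨g.toOnePoint.comp e.symm, by simp [he]⟩, ZeroAtInftyContinuousMap.ext fun x => ?_⟩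
  change g.toOnePoint (e.symm (e x)) = g x
  simp

end ContinuousMapZero

theorem ZeroAtInftyContinuousMap.dense_adjoin_singleton {𝕜 : Type*} [RCLike 𝕜] {h : C₀(X, 𝕜)}
    (hemb : IsEmbedding h) (hne : ∀ x, h x ≠ 0) :
    Dense (NonUnitalStarAlgebra.adjoin 𝕜 {h} : Set C₀(X, 𝕜)) := by
  have := hemb.t2Space
  -- `s = h(X) ∪ {0}`, compact as the image of the one-point compactification of `X`
  set s := range h.toOnePoint
  have : Fact (0 ∈ s) := ⟨⟨∞, rfl⟩⟩
  have : CompactSpace s := isCompact_iff_compactSpace.1 (isCompact_range (map_continuous _))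
  let τ : C(X, s) := ⟨fun x => ⟨h x, x, rfl⟩, (map_continuous h).subtype_mk _⟩
  have hτ : Tendsto τ (cocompact X) (𝓝 0) := tendsto_subtype_rng.2 (zero_at_infty h)
  have hτemb : IsEmbedding τ := hemb.codRestrict s fun x => ⟨x, rfl⟩
  have hrange : range τ = {0}ᶜ := by
    have h0 : ((0 : s) : 𝕜) = 0 := rfl
    ext ⟨t, p, rfl⟩
    induction p using OnePoint.rec with
    | infty => simpa [τ, Subtype.ext_iff, h0] using hne
    | coe x => simpa [τ, Subtype.ext_iff, h0] using hne x
  set Φ := ContinuousMapZero.precompZeroAtInfty (𝕜 := 𝕜) τ hτ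
  have hΦ : Φ (.id s) = h := rfl
  rw [← hΦ, ← NonUnitalStarAlgHom.map_adjoin_singleton, NonUnitalStarSubalgebra.coe_map]
  exact (ContinuousMapZero.precompZeroAtInfty_surjective hτ hτemb hrange).denseRange.dense_image
    (ContinuousMapZero.continuous_precompZeroAtInfty τ hτ) (ContinuousMapZero.adjoin_id_dense s)

lemma Set.Ici.tendsto_val_cocompact_atTop {α : Type*} [LinearOrder α] [TopologicalSpace α]
    [ClosedIciTopology α] [CompactIccSpace α] (c : α) :
    Tendsto (fun x : Ici c => (x : α)) (cocompact _) atTop := by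
  refine tendsto_atTop.2 fun b => mem_cocompact.2 ⟨(↑) ⁻¹' Icc c b, ?_, fun x hx => ?_⟩
  · exact (IsClosedEmbedding.subtypeVal isClosed_Ici).isCompact_preimage isCompact_Icc
  · exact (not_le.1 (not_and.1 hx x.2)).le

noncomputable def expNegIci (c : ℝ) : C₀(Ici c, ℂ) where
  toFun x := (Real.exp (-x) : ℂ)
  continuous_toFun := by fun_prop
  zero_at_infty' := by
    simpa only [Function.comp_def, Complex.ofReal_zero] using
      (Complex.continuous_ofReal.tendsto 0).comp
        (Real.tendsto_exp_neg_atTop_nhds_zero.comp (Ici.tendsto_val_cocompact_atTop c))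

lemma isEmbedding_expNegIci (c : ℝ) : IsEmbedding (expNegIci c) :=
  Complex.isometry_ofReal.isEmbedding.comp <| Real.isOpenEmbedding_exp.isEmbedding.comp <|
    (Homeomorph.neg ℝ).isEmbedding.comp .subtypeVal

def expDecaySubsemigroup (c : ℝ) : Subsemigroup C₀(Ici c, ℂ) where
  carrier := {g | ∃ a : ℝ, 0 < a ∧ ∀ x : Ici c, g x = Complex.exp (-(a : ℂ) * ((x : ℝ) : ℂ))}
  mul_mem' := by
    rintro f g ⟨a, ha, hf⟩ ⟨b, hb, hg⟩
    refine ⟨a + b, add_pos ha hb, fun x => ?_⟩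
    rw [ZeroAtInftyContinuousMap.mul_apply, hf, hg, ← Complex.exp_add]
    push_cast
    ring_nf

lemma adjoin_expNegIci_le_span (c : ℝ) :
    (NonUnitalStarAlgebra.adjoin ℂ {expNegIci c}).toSubmodule ≤
      Submodule.span ℂ (expDecaySubsemigroup c) := by
  have hstar : star (expNegIci c) = expNegIci c :=
    ZeroAtInftyContinuousMap.ext fun _ => Complex.conj_ofReal _
  have hmem : expNegIci c ∈ expDecaySubsemigroup c :=
    ⟨1, one_pos, fun x => by simp [expNegIci, Complex.ofReal_exp]⟩
  rw [NonUnitalStarAlgebra.adjoin_eq_span, Set.star_singleton, hstar, Set.union_self]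
  exact Submodule.span_mono (Subsemigroup.closure_le.2 (singleton_subset_iff.2 hmem))

/-- The complex linear span of the functions `x ↦ exp(-ax)`, `a > 0`, is dense in the
Banach space `C₀([c,∞), ℂ)` of continuous functions on `[c,∞)` vanishing at infinity,
with respect to the supremum norm. -/
theorem span_exp_dense_in_C0 (c : ℝ) :
    Dense ((Submodule.span ℂ
        {g : C₀(Set.Ici c, ℂ) | ∃ a : ℝ, 0 < a ∧
          ∀ x : Set.Ici c, g x = Complex.exp (-(a : ℂ) * ((x : ℝ) : ℂ))} :
      Submodule ℂ C₀(Set.Ici c, ℂ)) : Set C₀(Set.Ici c, ℂ)) :=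
  (ZeroAtInftyContinuousMap.dense_adjoin_singleton (isEmbedding_expNegIci c)
    fun _ => Complex.ofReal_ne_zero.2 (Real.exp_pos _).ne').mono (adjoin_expNegIci_le_span c)
end

section
/- (Mosco-type convergence, Step 1) Let c ∈ ℝ, let H and H_k (k ∈ ℕ) be complex Hilbert spaces, and let ι_k : H_k → H be bounded operators such that π_k := ι_k* satisfies π_k ι_k = id_{H_k} and sup_k ‖π_k‖ < ∞. Let L_k (on H_k) and L (on H) be bounded self-adjoint operators whose spectra are contained in [c,∞). Assume that for every a ≥ 0 and every f ∈ H one has ι_k exp(−aL_k) π_k f → exp(−aL) f in H as k → ∞. Then for every continuous function ψ : [c,∞) → ℂ vanishing at infinity and every f ∈ H one has ι_k ψ(L_k) π_k f → ψ(L) f in H as k → ∞. -/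
open Filter Topology ContinuousLinearMap

noncomputable section

/-- The continuous functional calculus `ψ(L)` of a self-adjoint bounded operator `L` (whose
spectrum is real) applied to a function `ψ` of a real variable, implemented via the
`ℂ`-functional calculus of the star-normal element `L`. -/
def cfcReal {H : Type*} [NormedAddCommGroup H] [InnerProductSpace ℂ H] [CompleteSpace H]
    (ψ : ℝ → ℂ) (L : H →L[ℂ] H) : H →L[ℂ] H :=
  cfc (fun z : ℂ => ψ z.re) L

/-!
On `[c, ∞)` the substitution `t = exp (c - x)` turns a continuous `ψ` vanishing at infinity into a
continuous function on `[0, 1]` (extended by `0` at `t = 0`); Weierstrass approximation by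
polynomials in `t` therefore approximates `ψ` uniformly on `[c, ∞)` by finite sums
`∑ₘ Aₘ exp (-m x)`. For such sums the claim is a finite linear combination of the hypothesis.
Since the functional calculus is contractive in the sup norm on the spectrum and `‖ι_k‖ = ‖π_k‖`
is bounded, the error of the approximation is uniform in `k`, and an `ε/3` argument concludes.
-/

open Polynomial

def expSum (A : ℕ → ℂ) (N : ℕ) (x : ℝ) : ℂ :=
  ∑ m ∈ Finset.range N, A m * Complex.exp (-((m : ℝ) : ℂ) * x)

section FunctionalCalculus

variable {H : Type*} [NormedAddCommGroup H] [InnerProductSpace ℂ H] [CompleteSpace H]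
  {M : H →L[ℂ] H}

lemma IsSelfAdjoint.cfcReal_exp_const_mul (hM : IsSelfAdjoint M) (z : ℂ) :
    cfcReal (fun x => Complex.exp (z * x)) M = NormedSpace.exp (z • M) := by
  have : IsStarNormal M := hM.isStarNormal
  rw [cfcReal, ← CFC.complex_exp_eq_normedSpace_exp, ← cfc_comp_const_mul z Complex.exp M]
  exact cfc_congr fun w hw => by rw [← hM.mem_spectrum_eq_re hw]

lemma IsSelfAdjoint.cfcReal_expSum (hM : IsSelfAdjoint M) (A : ℕ → ℂ) (N : ℕ) :
    cfcReal (expSum A N) M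
      = ∑ m ∈ Finset.range N, A m • NormedSpace.exp ((-((m : ℝ) : ℂ)) • M) := by
  have : IsStarNormal M := hM.isStarNormal
  have hsum : (fun w : ℂ => expSum A N w.re)
      = ∑ m ∈ Finset.range N, fun w : ℂ => A m * Complex.exp (-((m : ℝ) : ℂ) * w.re) := by
    ext w
    simp [expSum, Finset.sum_apply]
  rw [cfcReal, hsum, cfc_sum _ M _ fun m _ => by fun_prop]
  refine Finset.sum_congr rfl fun m _ => ?_
  rw [cfc_const_mul _ _ M (by fun_prop)]
  exact congrArg _ (hM.cfcReal_exp_const_mul _)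

lemma IsSelfAdjoint.norm_cfcReal_sub_le (hM : IsSelfAdjoint M) {s : Set ℝ}
    (hspec : spectrum ℝ M ⊆ s) {ψ g : ℝ → ℂ} (hψ : ContinuousOn ψ s) (hg : ContinuousOn g s)
    {ε : ℝ} (hε : 0 ≤ ε) (h : ∀ x ∈ s, ‖ψ x - g x‖ ≤ ε) :
    ‖cfcReal ψ M - cfcReal g M‖ ≤ ε := by
  have : IsStarNormal M := hM.isStarNormal
  have hre : Set.MapsTo Complex.re (spectrum ℂ M) s :=
    fun z hz => hspec (hM.spectrumRestricts.apply_mem hz)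
  have hcont := Complex.continuous_re.continuousOn (s := spectrum ℂ M)
  rw [cfcReal, cfcReal, ← cfc_sub (fun z => ψ z.re) (fun z => g z.re) M (hψ.comp hcont hre)
    (hg.comp hcont hre)]
  exact norm_cfc_le hε fun z hz => h z.re (hre hz)

end FunctionalCalculus

lemma norm_apply_apply_adjoint_le {𝕜 E F : Type*} [RCLike 𝕜]
    [NormedAddCommGroup E] [InnerProductSpace 𝕜 E] [CompleteSpace E]
    [NormedAddCommGroup F] [InnerProductSpace 𝕜 F] [CompleteSpace F]
    (A : E →L[𝕜] F) (T : E →L[𝕜] E) (x : F) {C : ℝ} (hA : ‖adjoint A‖ ≤ C) :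
    ‖A (T (adjoint A x))‖ ≤ C ^ 2 * ‖T‖ * ‖x‖ := by
  have hA' : ‖A‖ ≤ C := by rwa [← adjoint.norm_map A]
  have hC : 0 ≤ C := (norm_nonneg _).trans hA
  calc ‖A (T (adjoint A x))‖ ≤ ‖A‖ * (‖T‖ * (‖adjoint A‖ * ‖x‖)) := by
        grw [le_opNorm, le_opNorm, le_opNorm]
    _ ≤ C * (‖T‖ * (C * ‖x‖)) := by gcongr
    _ = C ^ 2 * ‖T‖ * ‖x‖ := by ring

lemma tendsto_of_forall_approx {κ E : Type*} [SeminormedAddCommGroup E] {l : Filter κ}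
    {u : κ → E} {y : E} (K : ℝ)
    (h : ∀ δ > 0, ∃ (v : κ → E) (z : E), Tendsto v l (𝓝 z) ∧
      (∀ᶠ k in l, ‖u k - v k‖ ≤ K * δ) ∧ ‖z - y‖ ≤ K * δ) :
    Tendsto u l (𝓝 y) := by
  refine Metric.tendsto_nhds.2 fun ε hε => ?_
  obtain ⟨v, z, hv, huv, hzy⟩ := h (ε / (3 * (|K| + 1))) (by positivity)
  have hKδ : K * (ε / (3 * (|K| + 1))) < ε / 3 := by
    rw [mul_div_assoc', div_lt_div_iff₀ (by positivity) (by norm_num)]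
    nlinarith [le_abs_self K]
  filter_upwards [huv, Metric.tendsto_nhds.1 hv (ε / 3) (by positivity)] with k hk hvk
  calc dist (u k) y ≤ dist (u k) (v k) + dist (v k) z + dist z y := dist_triangle4 _ _ _ _
    _ < ε := by rw [dist_eq_norm, dist_eq_norm (a := z)]; linarith

lemma exists_complex_polynomial_near_of_continuousOn (a b : ℝ) {u : ℝ → ℂ}
    (hu : ContinuousOn u (Set.Icc a b)) {ε : ℝ} (hε : 0 < ε) :
    ∃ p : ℂ[X], ∀ x ∈ Set.Icc a b, ‖p.eval (x : ℂ) - u x‖ < ε := by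
  obtain ⟨p, hp⟩ := exists_polynomial_near_of_continuousOn a b (fun x => (u x).re)
    (Complex.continuous_re.comp_continuousOn hu) (ε / 2) (half_pos hε)
  obtain ⟨q, hq⟩ := exists_polynomial_near_of_continuousOn a b (fun x => (u x).im)
    (Complex.continuous_im.comp_continuousOn hu) (ε / 2) (half_pos hε)
  refine ⟨p.map Complex.ofRealHom + C Complex.I * q.map Complex.ofRealHom, fun x hx => ?_⟩
  have hsplit : (p.map Complex.ofRealHom + C Complex.I * q.map Complex.ofRealHom).eval (x : ℂ) - u x
      = ((p.eval x - (u x).re : ℝ) : ℂ) + ((q.eval x - (u x).im : ℝ) : ℂ) * Complex.I := by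
    rw [eval_add, eval_mul, eval_C, ← Complex.ofRealHom_eq_coe, eval_map_apply, eval_map_apply]
    apply Complex.ext <;> simp
  calc _ ≤ |p.eval x - (u x).re| + |q.eval x - (u x).im| := by
        rw [hsplit]
        refine (Complex.norm_le_abs_re_add_abs_im _).trans_eq ?_
        simp
    _ < ε := by linarith [hp x hx, hq x hx]

lemma continuousOn_update_comp_log {c : ℝ} {ψ : ℝ → ℂ} (hψ : ContinuousOn ψ (Set.Ici c))
    (hψ0 : Tendsto ψ atTop (𝓝 0)) :
    ContinuousOn (Function.update (fun t => ψ (c - Real.log t)) 0 0) (Set.Icc 0 1) := by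
  intro t ht
  rcases ht.1.eq_or_lt with rfl | ht0
  · rw [continuousWithinAt_update_same]
    have hlog : Tendsto Real.log (𝓝[Set.Icc 0 1 \ {0}] 0) atBot :=
      Real.tendsto_log_nhdsGT_zero.mono_left
        (nhdsWithin_mono _ fun s hs => lt_of_le_of_ne hs.1.1 (Ne.symm hs.2))
    refine hψ0.comp ?_
    simpa only [sub_eq_add_neg, Function.comp_def] using tendsto_atTop_add_const_left _ c
      (tendsto_neg_atBot_atTop.comp hlog)
  · have hmaps : Set.MapsTo (fun t => c - Real.log t) (Set.Icc 0 1) (Set.Ici c) :=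
      fun s hs => by simpa using Real.log_nonpos hs.1 hs.2
    refine ContinuousWithinAt.congr_of_eventuallyEq (f := fun t => ψ (c - Real.log t))
      (ContinuousWithinAt.comp (g := ψ) (f := fun t => c - Real.log t) (hψ _ (hmaps ht))
        (continuousAt_const.sub (Real.continuousAt_log ht0.ne')).continuousWithinAt hmaps)
      ?_ (Function.update_of_ne ht0.ne' _ _)
    filter_upwards [mem_nhdsWithin_of_mem_nhds (Ioi_mem_nhds ht0)] with s hs
    exact Function.update_of_ne (ne_of_gt hs) _ _

lemma exists_expSum_near {c : ℝ} {ψ : ℝ → ℂ} (hψ : ContinuousOn ψ (Set.Ici c))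
    (hψ0 : Tendsto ψ atTop (𝓝 0)) {ε : ℝ} (hε : 0 < ε) :
    ∃ (A : ℕ → ℂ) (N : ℕ), ∀ x ∈ Set.Ici c, ‖ψ x - expSum A N x‖ ≤ ε := by
  obtain ⟨p, hp⟩ := exists_complex_polynomial_near_of_continuousOn 0 1
    (continuousOn_update_comp_log hψ hψ0) hε
  set A : ℕ → ℂ := fun m => p.coeff m * Complex.exp (m * c)
  refine ⟨A, p.natDegree + 1, fun x hx => ?_⟩
  have ht : Real.exp (c - x) ∈ Set.Icc (0 : ℝ) 1 :=
    ⟨(Real.exp_pos _).le, Real.exp_le_one_iff.2 (by simpa using hx)⟩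
  have hpt : p.eval (Real.exp (c - x) : ℂ) = expSum A (p.natDegree + 1) x := by
    rw [eval_eq_sum_range' (Nat.lt_succ_self _)]
    refine Finset.sum_congr rfl fun m _ => ?_
    rw [Complex.ofReal_exp, ← Complex.exp_nat_mul, mul_assoc, ← Complex.exp_add]
    push_cast
    ring_nf
  have hut : Function.update (fun t => ψ (c - Real.log t)) 0 0 (Real.exp (c - x)) = ψ x := by
    rw [Function.update_of_ne (Real.exp_pos _).ne', Real.log_exp, sub_sub_cancel]
  rw [← hpt, ← hut, norm_sub_rev]
  exact (hp _ ht).le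

lemma tendsto_cfcReal_expSum_of_tendsto_exp {κ : Type*} {l : Filter κ}
    {H : Type*} [NormedAddCommGroup H] [InnerProductSpace ℂ H] [CompleteSpace H]
    {Hk : κ → Type*} [∀ k, NormedAddCommGroup (Hk k)] [∀ k, InnerProductSpace ℂ (Hk k)]
    [∀ k, CompleteSpace (Hk k)] {ι : ∀ k, Hk k →L[ℂ] H} {Lk : ∀ k, Hk k →L[ℂ] Hk k}
    {L : H →L[ℂ] H} (hLk : ∀ k, IsSelfAdjoint (Lk k)) (hL : IsSelfAdjoint L)
    (hexp : ∀ m : ℕ, ∀ f : H,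
      Tendsto (fun k => ι k (NormedSpace.exp ((-((m : ℝ) : ℂ)) • Lk k) (adjoint (ι k) f)))
        l (𝓝 (NormedSpace.exp ((-((m : ℝ) : ℂ)) • L) f)))
    (A : ℕ → ℂ) (N : ℕ) (f : H) :
    Tendsto (fun k => ι k (cfcReal (expSum A N) (Lk k) (adjoint (ι k) f))) l
      (𝓝 (cfcReal (expSum A N) L f)) := by
  simp only [(hLk _).cfcReal_expSum, hL.cfcReal_expSum, sum_apply, smul_apply, map_sum, map_smul]
  exact tendsto_finsetSum _ fun m _ => (hexp m f).const_smul (A m)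

theorem mosco_step1_general (c : ℝ)
    {H : Type*} [NormedAddCommGroup H] [InnerProductSpace ℂ H] [CompleteSpace H]
    {Hk : ℕ → Type*} [∀ k, NormedAddCommGroup (Hk k)] [∀ k, InnerProductSpace ℂ (Hk k)]
    [∀ k, CompleteSpace (Hk k)]
    (ι : ∀ k, Hk k →L[ℂ] H)
    (hπbd : ∃ C : ℝ, ∀ k, ‖adjoint (ι k)‖ ≤ C)
    (Lk : ∀ k, Hk k →L[ℂ] Hk k) (L : H →L[ℂ] H)
    (hLk_sa : ∀ k, IsSelfAdjoint (Lk k)) (hL_sa : IsSelfAdjoint L)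
    (hLk_spec : ∀ k, spectrum ℝ (Lk k) ⊆ Set.Ici c) (hL_spec : spectrum ℝ L ⊆ Set.Ici c)
    (hsemigroup : ∀ a : ℝ, 0 ≤ a → ∀ f : H,
      Tendsto (fun k => ι k (NormedSpace.exp ((-(a : ℂ)) • Lk k) (adjoint (ι k) f)))
        atTop (𝓝 (NormedSpace.exp ((-(a : ℂ)) • L) f))) :
    ∀ ψ : ℝ → ℂ, ContinuousOn ψ (Set.Ici c) → Tendsto ψ atTop (𝓝 0) →
      ∀ f : H,
        Tendsto (fun k => ι k (cfcReal ψ (Lk k) (adjoint (ι k) f)))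
          atTop (𝓝 (cfcReal ψ L f)) := by
  intro ψ hψ hψ0 f
  obtain ⟨C, hC⟩ := hπbd
  refine tendsto_of_forall_approx ((C ^ 2 + 1) * ‖f‖) fun δ hδ => ?_
  obtain ⟨A, N, hAN⟩ := exists_expSum_near hψ hψ0 hδ
  have hg : ContinuousOn (expSum A N) (Set.Ici c) := by unfold expSum; fun_prop
  refine ⟨_, _, tendsto_cfcReal_expSum_of_tendsto_exp hLk_sa hL_sa
    (fun m => hsemigroup m m.cast_nonneg) A N f, .of_forall fun k => ?_, ?_⟩
  · calc _ ≤ C ^ 2 * ‖cfcReal ψ (Lk k) - cfcReal (expSum A N) (Lk k)‖ * ‖f‖ := by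
          rw [← map_sub, ← sub_apply]
          exact norm_apply_apply_adjoint_le _ _ _ (hC k)
      _ ≤ C ^ 2 * δ * ‖f‖ := by
          gcongr
          exact (hLk_sa k).norm_cfcReal_sub_le (hLk_spec k) hψ hg hδ.le hAN
      _ ≤ (C ^ 2 + 1) * ‖f‖ * δ := by nlinarith [norm_nonneg f, hδ.le]
  · calc _ ≤ ‖cfcReal (expSum A N) L - cfcReal ψ L‖ * ‖f‖ := by
          rw [← sub_apply]
          exact le_opNorm _ _
      _ ≤ δ * ‖f‖ := by
          gcongr
          exact hL_sa.norm_cfcReal_sub_le hL_spec hg hψ hδ.le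
            fun x hx => norm_sub_rev (ψ x) _ ▸ hAN x hx
      _ ≤ (C ^ 2 + 1) * ‖f‖ * δ := by
          nlinarith [mul_nonneg (mul_nonneg (sq_nonneg C) (norm_nonneg f)) hδ.le]

/-- **Mosco-type convergence, Step 1.** If `ι_k exp(-aL_k) π_k → exp(-aL)` strongly for all
`a ≥ 0`, then `ι_k ψ(L_k) π_k → ψ(L)` strongly for every continuous `ψ : [c,∞) → ℂ`
vanishing at infinity. -/
theorem mosco_step1 (c : ℝ)
    {H : Type*} [NormedAddCommGroup H] [InnerProductSpace ℂ H] [CompleteSpace H]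
    {Hk : ℕ → Type*} [∀ k, NormedAddCommGroup (Hk k)] [∀ k, InnerProductSpace ℂ (Hk k)]
    [∀ k, CompleteSpace (Hk k)]
    (ι : ∀ k, Hk k →L[ℂ] H)
    (hπι : ∀ k, (adjoint (ι k)).comp (ι k) = ContinuousLinearMap.id ℂ (Hk k))
    (hπbd : ∃ C : ℝ, ∀ k, ‖adjoint (ι k)‖ ≤ C)
    (Lk : ∀ k, Hk k →L[ℂ] Hk k) (L : H →L[ℂ] H)
    (hLk_sa : ∀ k, IsSelfAdjoint (Lk k)) (hL_sa : IsSelfAdjoint L)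
    (hLk_spec : ∀ k, spectrum ℝ (Lk k) ⊆ Set.Ici c) (hL_spec : spectrum ℝ L ⊆ Set.Ici c)
    (hsemigroup : ∀ a : ℝ, 0 ≤ a → ∀ f : H,
      Tendsto (fun k => ι k (NormedSpace.exp ((-(a : ℂ)) • Lk k) (adjoint (ι k) f)))
        atTop (𝓝 (NormedSpace.exp ((-(a : ℂ)) • L) f))) :
    ∀ ψ : ℝ → ℂ, ContinuousOn ψ (Set.Ici c) → Tendsto ψ atTop (𝓝 0) →
      ∀ f : H,
        Tendsto (fun k => ι k (cfcReal ψ (Lk k) (adjoint (ι k) f)))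
          atTop (𝓝 (cfcReal ψ L f)) :=
  mosco_step1_general c ι hπbd Lk L hLk_sa hL_sa hLk_spec hL_spec hsemigroup
end
end

section
/- Let (X,b,m) be a weighted graph, θ a magnetic potential and v an electric potential on X. Then L̃_{v,θ}[C_c(X)] ⊆ ℓ²(X,m) if and only if ∑_{y∈X} b(x,y)²/m(y) < ∞ for every x ∈ X. In particular, this condition is independent of the choice of v and θ. -/
open Complex

/-!
Off the finite support `s` of `f`, the operator reduces to the finite sum
`L̃f(x) = -∑_{y ∈ s} b(x,y) e^{iθ(x,y)} f(y) / m(x)`, since every term carrying `f(x)`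
(including `v(x) f(x)`) vanishes there, and finitely many points do not affect summability.
Each summand contributes `|f(y)|² b(x,y)²/m(x)` to the weighted `ℓ²` norm, so sufficiency
follows from the triangle inequality, and necessity from testing `f = δ_{x₀}` and the
symmetry of `b`.
-/

theorem summable_norm_finset_sum_sq_mul {ι X E : Type*} [SeminormedAddCommGroup E]
    {m : X → ℝ} (hm : ∀ x, 0 ≤ m x) (s : Finset ι) {u : ι → X → E}
    (hu : ∀ i ∈ s, Summable fun x => ‖u i x‖ ^ 2 * m x) :
    Summable fun x => ‖∑ i ∈ s, u i x‖ ^ 2 * m x := by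
  refine .of_nonneg_of_le (fun x => by have := hm x; positivity) (fun x => ?_)
    ((summable_sum hu).mul_left (s.card : ℝ))
  calc ‖∑ i ∈ s, u i x‖ ^ 2 * m x
      ≤ (∑ i ∈ s, ‖u i x‖) ^ 2 * m x := by
        gcongr
        · exact hm x
        · exact norm_sum_le _ _
    _ ≤ s.card * (∑ i ∈ s, ‖u i x‖ ^ 2) * m x := by
        gcongr
        · exact hm x
        · exact sq_sum_le_card_mul_sum_sq
    _ = s.card * ∑ i ∈ s, ‖u i x‖ ^ 2 * m x := by rw [mul_assoc, Finset.sum_mul]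

theorem norm_ofReal_inv_mul_sq_mul (r : ℝ) (z : ℂ) :
    ‖((r⁻¹ : ℝ) : ℂ) * z‖ ^ 2 * r = ‖z‖ ^ 2 / r := by
  rw [norm_mul, norm_real, Real.norm_eq_abs, mul_pow, sq_abs]
  rcases eq_or_ne r 0 with rfl | hr
  · simp
  · field_simp

theorem norm_sq_hopping_term (r β t : ℝ) (c : ℂ) :
    ‖((r⁻¹ : ℝ) : ℂ) * ((β : ℂ) * exp (I * t) * c)‖ ^ 2 * r = ‖c‖ ^ 2 * (β ^ 2 / r) := by
  rw [norm_ofReal_inv_mul_sq_mul, norm_mul, norm_mul, mul_comm I, norm_exp_ofReal_mul_I,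
    norm_real, Real.norm_eq_abs, mul_one, mul_pow, sq_abs, mul_comm, mul_div_assoc]

theorem magneticSchrodingerOp_eventuallyEq_neg_sum {X : Type*} (b : X → X → ℝ) (m : X → ℝ)
    (θ : X → X → ℝ) (v : X → ℝ) {f : X → ℂ} {s : Finset X} (hs : Function.support f ⊆ s) :
    magneticSchrodingerOp b m θ v f =ᶠ[Filter.cofinite]
      fun x => -∑ y ∈ s, ((m x)⁻¹ : ℝ) * ((b x y : ℂ) * exp (I * θ x y) * f y) := by
  filter_upwards [s.eventually_cofinite_notMem] with x hx
  have hf_off : ∀ y ∉ s, f y = 0 := fun y hy => Function.notMem_support.mp (mt (@hs y) hy)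
  have hoff : ∀ y ∉ s, (b x y : ℂ) * (f x - exp (I * θ x y) * f y) = 0 := fun y hy => by
    rw [hf_off x hx, hf_off y hy]; ring
  rw [magneticSchrodingerOp, tsum_eq_sum hoff, Finset.mul_sum, ← Finset.sum_neg_distrib,
    hf_off x hx]
  simp only [mul_zero, add_zero]
  exact Finset.sum_congr rfl fun y _ => by ring

theorem magneticSchrodingerOp_maps_compactlySupported_into_l2_iff_general {X : Type*}
    (b : X → X → ℝ) (m : X → ℝ) (θ : X → X → ℝ) (v : X → ℝ)
    (hb_symm : ∀ x y, b x y = b y x)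
    (hm : ∀ x, 0 < m x) :
    (∀ f : X → ℂ, (Function.support f).Finite →
        Summable fun x => ‖magneticSchrodingerOp b m θ v f x‖ ^ 2 * m x)
      ↔ ∀ x, Summable fun y => (b x y) ^ 2 / m y := by
  classical
  constructor
  · intro h x₀
    have hδ : Function.support (Pi.single x₀ (1 : ℂ)) ⊆ ({x₀} : Finset X) := by
      rw [Finset.coe_singleton]; exact Pi.support_single_subset
    refine (summable_congr_cofinite ?_).mp (h _ ((Finset.finite_toSet _).subset hδ))
    filter_upwards [magneticSchrodingerOp_eventuallyEq_neg_sum b m θ v hδ] with x hLx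
    rw [hLx, Finset.sum_singleton, norm_neg, norm_sq_hopping_term, Pi.single_eq_same, norm_one,
      one_pow, one_mul, hb_symm]
  · intro h f hf
    have hs : Function.support f ⊆ hf.toFinset := hf.coe_toFinset.symm.subset
    have hterm (y : X) : Summable fun x =>
        ‖((m x)⁻¹ : ℝ) * ((b x y : ℂ) * exp (I * θ x y) * f y)‖ ^ 2 * m x :=
      ((h y).mul_left (‖f y‖ ^ 2)).congr fun x => by rw [norm_sq_hopping_term, hb_symm]
    refine (summable_congr_cofinite ?_).mpr
      (summable_norm_finset_sum_sq_mul (fun x => (hm x).le) hf.toFinset fun y _ => hterm y)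
    filter_upwards [magneticSchrodingerOp_eventuallyEq_neg_sum b m θ v hs] with x hLx
    rw [hLx, norm_neg]

/-- `L̃_{v,θ}` maps `C_c(X)` into `ℓ²(X,m)` if and only if `∑_y b(x,y)²/m(y) < ∞` for all
`x ∈ X`; in particular this condition is independent of the potentials `v` and `θ`. -/
theorem magneticSchrodingerOp_maps_compactlySupported_into_l2_iff {X : Type*} [Countable X]
    (b : X → X → ℝ) (m : X → ℝ) (θ : X → X → ℝ) (v : X → ℝ)
    (hb_symm : ∀ x y, b x y = b y x) (hb_nonneg : ∀ x y, 0 ≤ b x y)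
    (hb_diag : ∀ x, b x x = 0) (hb_sum : ∀ x, Summable fun y => b x y)
    (hm : ∀ x, 0 < m x) (hθ : ∀ x y, θ x y = - θ y x) :
    (∀ f : X → ℂ, (Function.support f).Finite →
        Summable fun x => ‖magneticSchrodingerOp b m θ v f x‖ ^ 2 * m x)
      ↔ ∀ x, Summable fun y => (b x y) ^ 2 / m y :=
  magneticSchrodingerOp_maps_compactlySupported_into_l2_iff_general b m θ v hb_symm hm
end
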